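/- Let g be a unitary automorphism of an n-dimensional hermitian space (V, h) over (E, σ), let v ∈ V be such that v, g v, …, g^{n−1} v form an E-basis of V, and let L be the O-span of v, g v, …, g^{n−1} v; assume g L = L. Then the dual lattice L* satisfies g L* = L*, and L* is again g-cyclic: L* is the O-span of v′, g v′, …, g^{n−1} v′, where v′ is the unique vector with h(v, v′) = 1 and h(g^i v, v′) = 0 for 1 ≤ i ≤ n−1 (the 0-th vector of the basis dual to (v, g v, …, g^{n−1} v)). -/

import Mathlib

/-!
The form identifies `V` with its `E`-linear dual, so a basis `b` has a dual basis `b'` with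
`h (b' i) (b j) = δᵢⱼ`; coordinates in `b'` are the pairings with `b`, so the dual lattice of
`span O b` is `span O b'`. For the cyclic basis `bᵢ = gⁱ v` the vector `v'` is `b'₀`, and
unitarity gives `h (gᵏ v') (gⁱ v) = h v' (g^(i-k) v) = δₖᵢ` for `k ≤ i`. The vectors `gᵏ v'` lie
in the `g`-stable lattice `L*`, so their Gram matrix against `(gⁱ v)` is unitriangular with
entries in `O`, hence invertible over `O`, which puts every `b'ⱼ` in the `O`-span of the `gᵏ v'`.
-/

open Module Submodule

namespace LinearMap

variable {E : Type*} [Field E] {σ : E →+* E} {V : Type*} [AddCommGroup V] [Module E V]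
  (h : V →ₗ[E] V →ₛₗ[σ] E)

section DualBasis

variable {ι : Type*} [Fintype ι]

theorem bijective_pi_flip_basis (hh : h.SeparatingLeft) (b : Basis ι E V) :
    Function.Bijective (LinearMap.pi fun i => h.flip (b i)) := by
  have : FiniteDimensional E V := b.finiteDimensional_of_finite
  have hinj : Function.Injective (LinearMap.pi fun i => h.flip (b i)) := by
    rw [← LinearMap.ker_eq_bot, LinearMap.ker_eq_bot']
    intro x hx
    have hx0 : h x = 0 := b.ext fun i => congr_fun hx i
    exact hh x fun y => by rw [hx0, zero_apply]
  refine ⟨hinj, (injective_iff_surjective_of_finrank_eq_finrank ?_).mp hinj⟩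
  rw [finrank_eq_card_basis b, finrank_fintype_fun_eq_card]

noncomputable def dualBasis (hh : h.SeparatingLeft) (b : Basis ι E V) : Basis ι E V :=
  .ofEquivFun (.ofBijective _ (h.bijective_pi_flip_basis hh b))

variable {h} (hh : h.SeparatingLeft) (b : Basis ι E V)

@[simp]
theorem dualBasis_repr_apply (x : V) (i : ι) : (dualBasis h hh b).repr x i = h x (b i) :=
  Basis.ofEquivFun_repr_apply _ x i

variable [DecidableEq ι]

theorem apply_dualBasis_left (i j : ι) :
    h (dualBasis h hh b i) (b j) = if i = j then 1 else 0 := by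
  rw [← dualBasis_repr_apply hh, Basis.repr_self, Finsupp.single_apply]

theorem eq_dualBasis_iff {x : V} {i : ι} :
    x = dualBasis h hh b i ↔ ∀ j, h x (b j) = if i = j then 1 else 0 := by
  simp only [(dualBasis h hh b).ext_elem_iff, dualBasis_repr_apply, apply_dualBasis_left]

theorem eq_dualBasis_iff_right (herm : ∀ x y : V, h y x = σ (h x y)) {x : V} {i : ι} :
    x = dualBasis h hh b i ↔ ∀ j, h (b j) x = if i = j then 1 else 0 := by
  rw [eq_dualBasis_iff]
  refine forall_congr' fun j => ⟨fun H => ?_, fun H => ?_⟩ <;>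
    rw [herm, H] <;> split_ifs <;> simp

end DualBasis

section DualLattice

variable (O : Subring E)

def dualLattice (L : Submodule O V) : Submodule O V where
  carrier := {x | ∀ l ∈ L, h x l ∈ O}
  add_mem' hx hy l hl := by
    rw [map_add, add_apply]
    exact O.add_mem (hx l hl) (hy l hl)
  zero_mem' l _ := by
    rw [map_zero, zero_apply]
    exact O.zero_mem
  smul_mem' a x hx l hl := by
    rw [Subring.smul_def, map_smul, smul_apply, smul_eq_mul]
    exact O.mul_mem a.2 (hx l hl)

variable {h O}

theorem mem_dualLattice_span_iff (hO : ∀ a ∈ O, σ a ∈ O) {s : Set V} {x : V} :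
    x ∈ dualLattice h O (span O s) ↔ ∀ l ∈ s, h x l ∈ O := by
  refine ⟨fun hx l hl => hx l (subset_span hl), fun hx l hl => ?_⟩
  induction hl using span_induction with
  | mem l hl => exact hx l hl
  | zero => rw [map_zero]; exact O.zero_mem
  | add l m _ _ hl hm => rw [map_add]; exact O.add_mem hl hm
  | smul a l _ hl =>
    rw [Subring.smul_def, map_smulₛₗ, smul_eq_mul]
    exact O.mul_mem (hO a a.2) hl

variable {ι : Type*} [Fintype ι] (hh : h.SeparatingLeft) (b : Basis ι E V)

theorem mem_span_dualBasis_iff {x : V} :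
    x ∈ span O (Set.range (dualBasis h hh b)) ↔ ∀ i, h x (b i) ∈ O := by
  simp only [(dualBasis h hh b).mem_span_iff_repr_mem O, dualBasis_repr_apply]
  exact forall_congr' fun i => ⟨fun ⟨a, ha⟩ => ha ▸ a.2, fun hi => ⟨⟨_, hi⟩, rfl⟩⟩

theorem dualLattice_span_basis (hO : ∀ a ∈ O, σ a ∈ O) :
    dualLattice h O (span O (Set.range b)) = span O (Set.range (dualBasis h hh b)) := by
  ext x
  rw [mem_dualLattice_span_iff hO, mem_span_dualBasis_iff, Set.forall_mem_range]

theorem dualBasis_mem_span_of_isUnit_det [DecidableEq ι] (w : ι → V) (A : Matrix ι ι O)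
    (hA : ∀ k i, (A k i : E) = h (w k) (b i)) (hdet : IsUnit A.det) (j : ι) :
    dualBasis h hh b j ∈ span O (Set.range w) := by
  have hdual : ∑ k, (A⁻¹ : Matrix ι ι O) j k • w k = dualBasis h hh b j := by
    rw [eq_dualBasis_iff]
    intro i
    have hinv := congr_fun (congr_fun (A.nonsing_inv_mul hdet) j) i
    rw [Matrix.mul_apply, Matrix.one_apply] at hinv
    simp only [map_sum, sum_apply, Subring.smul_def, map_smul, smul_apply, smul_eq_mul, ← hA]
    simpa [apply_ite] using congrArg ((↑) : O → E) hinv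
  rw [← hdual]
  exact sum_mem fun k _ => smul_mem _ _ (subset_span (Set.mem_range_self k))

end DualLattice

section Unitary

variable {h} {g : V ≃ₗ[E] V} (hg : ∀ x y, h (g x) (g y) = h x y)
include hg

theorem apply_pow_apply_pow (k : ℕ) (x y : V) : h ((g ^ k) x) ((g ^ k) y) = h x y := by
  induction k with
  | zero => rfl
  | succ k ih => rw [pow_succ', LinearEquiv.mul_apply, LinearEquiv.mul_apply, hg, ih]

variable {O : Subring E} {L : Submodule O V} (hgL : g '' L = L)
include hgL

theorem apply_mem_dualLattice_iff {x : V} :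
    g x ∈ dualLattice h O L ↔ x ∈ dualLattice h O L := by
  have hgl {l : V} (hl : l ∈ L) : g l ∈ L := by
    rw [← SetLike.mem_coe, ← hgL]; exact Set.mem_image_of_mem g hl
  refine ⟨fun hx l hl => hg x l ▸ hx (g l) (hgl hl), fun hx l hl => ?_⟩
  obtain ⟨m, hm, rfl⟩ : l ∈ g '' L := hgL.symm ▸ hl
  exact (hg x m).symm ▸ hx m hm

theorem image_dualLattice : g '' dualLattice h O L = dualLattice h O L := by
  ext x
  rw [LinearEquiv.image_eq_preimage_symm, Set.mem_preimage, SetLike.mem_coe, SetLike.mem_coe,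
    ← apply_mem_dualLattice_iff hg hgL, LinearEquiv.apply_symm_apply]

theorem pow_apply_mem_dualLattice {x : V} (hx : x ∈ dualLattice h O L) (k : ℕ) :
    (g ^ k) x ∈ dualLattice h O L := by
  induction k with
  | zero => exact hx
  | succ k ih => rwa [pow_succ', LinearEquiv.mul_apply, apply_mem_dualLattice_iff hg hgL]

end Unitary

section Cyclic

variable {h} {g : V ≃ₗ[E] V} (hg : ∀ x y, h (g x) (g y) = h x y)
include hg

theorem apply_pow_apply_pow_of_le {n : ℕ} {x v : V}
    (hx : ∀ i < n, h x ((g ^ i) v) = if i = 0 then 1 else 0) {k i : ℕ} (hki : k ≤ i)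
    (hi : i < n) : h ((g ^ k) x) ((g ^ i) v) = if k = i then 1 else 0 := by
  obtain ⟨d, rfl⟩ := Nat.exists_eq_add_of_le hki
  rw [pow_add, LinearEquiv.mul_apply, apply_pow_apply_pow hg, hx d (by omega)]
  simp

theorem dualLattice_span_eq_span_pow_dualBasis {O : Subring E} (hO : ∀ a ∈ O, σ a ∈ O)
    (hh : h.SeparatingLeft) {n : ℕ} (hn : 0 < n) (b : Basis (Fin n) E V) {v : V}
    (hb : ∀ i : Fin n, b i = (g ^ (i : ℕ)) v)
    (hgL : g '' span O (Set.range b) = span O (Set.range b)) :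
    dualLattice h O (span O (Set.range b)) =
      span O (Set.range fun k : Fin n => (g ^ (k : ℕ)) (dualBasis h hh b ⟨0, hn⟩)) := by
  set v₀ := dualBasis h hh b ⟨0, hn⟩
  have hv₀ : v₀ ∈ dualLattice h O (span O (Set.range b)) :=
    (dualLattice_span_basis hh b hO).symm ▸ subset_span (Set.mem_range_self _)
  have hw (k : ℕ) := pow_apply_mem_dualLattice hg hgL hv₀ k
  have hgram (k i : Fin n) (hki : k ≤ i) :
      h ((g ^ (k : ℕ)) v₀) (b i) = if k = i then 1 else 0 := by
    have hv₀v (j : ℕ) (hj : j < n) : h v₀ ((g ^ j) v) = if j = 0 then 1 else 0 := by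
      rw [← hb ⟨j, hj⟩, apply_dualBasis_left]
      simp [Fin.ext_iff, eq_comm]
    rw [hb, apply_pow_apply_pow_of_le hg hv₀v hki i.2]
    simp only [Fin.val_inj]
  let A : Matrix (Fin n) (Fin n) O := fun k i =>
    ⟨h ((g ^ (k : ℕ)) v₀) (b i), hw k _ (subset_span (Set.mem_range_self i))⟩
  have hdet : A.det = 1 := by
    rw [Matrix.det_of_isLowerTriangular]
    · exact Finset.prod_eq_one fun i _ => Subtype.ext (by simp [A, hgram i i le_rfl])
    · intro k i hik
      exact Subtype.ext (by simp [A, hgram k i hik.le, (OrderDual.toDual_lt_toDual.1 hik).ne])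
  refine le_antisymm ?_ (span_le.2 (Set.range_subset_iff.2 fun k => hw k))
  rw [dualLattice_span_basis hh b hO, span_le, Set.range_subset_iff]
  exact dualBasis_mem_span_of_isUnit_det hh b _ A (fun _ _ => rfl) (hdet ▸ isUnit_one)

end Cyclic

end LinearMap

theorem stmt0 {E : Type*} [Field E] (σ : E →+* E)
    {V : Type*} [AddCommGroup V] [Module E V]
    (h : V →ₗ[E] V →ₛₗ[σ] E)
    (h_herm : ∀ x y : V, h y x = σ (h x y))
    (h_nondeg : ∀ x : V, (∀ y : V, h x y = 0) → x = 0)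
    (O : Subring E) (hO : ∀ a ∈ O, σ a ∈ O)
    (n : ℕ) (hn : 0 < n)
    (g : V ≃ₗ[E] V) (hg : ∀ x y : V, h (g x) (g y) = h x y)
    (v : V) (b : Module.Basis (Fin n) E V) (hb : ∀ i : Fin n, b i = (g ^ (i : ℕ)) v)
    (L : Submodule O V)
    (hL : L = Submodule.span O (Set.range fun i : Fin n => (g ^ (i : ℕ)) v))
    (hgL : (⇑g) '' (L : Set V) = (L : Set V)) :
    (∃! v' : V, h v v' = 1 ∧ ∀ i : Fin n, 1 ≤ (i : ℕ) → h ((g ^ (i : ℕ)) v) v' = 0) ∧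
    ∀ v' : V, (h v v' = 1 ∧ ∀ i : Fin n, 1 ≤ (i : ℕ) → h ((g ^ (i : ℕ)) v) v' = 0) →
      (⇑g) '' {x : V | ∀ l ∈ L, h x l ∈ O} = {x : V | ∀ l ∈ L, h x l ∈ O} ∧
      {x : V | ∀ l ∈ L, h x l ∈ O}
        = ↑(Submodule.span O (Set.range fun i : Fin n => (g ^ (i : ℕ)) v')) := by
  rw [← funext hb] at hL
  subst hL
  have hv₀ (w : V) : (h v w = 1 ∧ ∀ i : Fin n, 1 ≤ (i : ℕ) → h ((g ^ (i : ℕ)) v) w = 0) ↔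
      w = LinearMap.dualBasis h h_nondeg b ⟨0, hn⟩ := by
    simp only [LinearMap.eq_dualBasis_iff_right h_nondeg b h_herm, hb, Fin.ext_iff]
    refine ⟨fun ⟨h0, hpos⟩ i => ?_, fun H => ⟨by simpa using H ⟨0, hn⟩, fun i hi => ?_⟩⟩
    · split_ifs with hi
      · simpa [← hi] using h0
      · exact hpos i (by omega)
    · simpa [show (i : ℕ) ≠ 0 by omega, eq_comm] using H i
  refine ⟨⟨_, (hv₀ _).2 rfl, fun w hw => (hv₀ w).1 hw⟩, fun v' hv' => ?_⟩
  obtain rfl := (hv₀ v').1 hv'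
  exact ⟨LinearMap.image_dualLattice hg hgL, congrArg SetLike.coe
    (LinearMap.dualLattice_span_eq_span_pow_dualBasis hg hO h_nondeg hn b hb hgL)⟩
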